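/- Let A, B be partial approximation operators on L^c with A ≤_p B (i.e., A(x,y) ≤_p B(x,y) for all (x,y) ∈ L^c). If (a,b) is A-prudent then (a,b) is B-prudent and (c↓_A(b), c↑_A(a)) ≤_p (c↓_B(b), c↑_B(a)). -/

import Mathlib

variable {L : Type*} [CompleteLattice L]

/-- The precision ordering on pairs of lattice elements:
`(x, y) ≤ₚ (x', y')` iff `x ≤ x'` and `y' ≤ y`. -/
def precLE (p q : L × L) : Prop := p.1 ≤ q.1 ∧ q.2 ≤ p.2

/-- A pair `(x, y)` is consistent if `x ≤ y`. -/
def ConsistentPair (p : L × L) : Prop := p.1 ≤ p.2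

/-- A partial approximation operator on the consistent pairs `L^c` of a complete
lattice `L`, given by its two component functions `A1`, `A2`.  It maps consistent
pairs to consistent pairs, is `≤ₚ`-monotone on consistent pairs, and has equal
components on the diagonal. -/
structure PartialApprox (L : Type*) [CompleteLattice L] where
  A1 : L → L → L
  A2 : L → L → L
  cons : ∀ x y : L, x ≤ y → A1 x y ≤ A2 x y
  mono1 : ∀ x y x' y' : L, x ≤ y → x' ≤ y' → x ≤ x' → y' ≤ y → A1 x y ≤ A1 x' y'
  mono2 : ∀ x y x' y' : L, x ≤ y → x' ≤ y' → x ≤ x' → y' ≤ y → A2 x' y' ≤ A2 x y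
  diag : ∀ x : L, A1 x x = A2 x x

namespace PartialApprox

/-- `(a, b)` is `A`-reliable if it is consistent and `(a, b) ≤ₚ A(a, b)`. -/
def reliable (A : PartialApprox L) (a b : L) : Prop :=
  a ≤ b ∧ a ≤ A.A1 a b ∧ A.A2 a b ≤ b

/-- The least fixpoint of `A.A1 (·, b)` on the interval `[⊥, b]`
(for `A`-reliable pairs this least fixpoint exists and equals this `sInf`). -/
def cdown (A : PartialApprox L) (b : L) : L :=
  sInf {z | z ≤ b ∧ A.A1 z b = z}

/-- The least fixpoint of `A.A2 (a, ·)` on the interval `[a, ⊤]`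
(for `A`-reliable pairs this least fixpoint exists and equals this `sInf`). -/
def cup (A : PartialApprox L) (a : L) : L :=
  sInf {z | a ≤ z ∧ A.A2 a z = z}

/-- `(a, b)` is `A`-prudent if it is `A`-reliable and `a ≤ c↓(b)`. -/
def prudent (A : PartialApprox L) (a b : L) : Prop :=
  A.reliable a b ∧ a ≤ A.cdown b

/-- `(x, y)` is a stable fixpoint of `A` if it is `A`-reliable, `x = c↓(y)`
and `y = c↑(x)`. -/
def stableFix (A : PartialApprox L) (x y : L) : Prop :=
  A.reliable x y ∧ x = A.cdown y ∧ y = A.cup x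

end PartialApprox

/-! For `f` monotone on `[lo, hi]` with `lo ≤ f lo`, the infimum of the fixpoints of `f` in
`[lo, hi]` lies below every prefixpoint there (Knaster–Tarski). Hence `c↓_A(b)` and `c↑_B(a)`
lie below every prefixpoint of the respective map; since `A ≤ₚ B`, the fixpoints defining
`c↓_B(b)` are prefixpoints of `A¹(·, b)` and those defining `c↑_A(a)` are prefixpoints of
`B²(a, ·)`. -/

open Set

theorem MonotoneOn.sInf_fixed_Icc_le {α : Type*} [CompleteSemilatticeInf α] {f : α → α}
    {lo hi z : α} (hf : MonotoneOn f (Icc lo hi)) (hlo : lo ≤ f lo) (hz : z ∈ Icc lo hi)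
    (hfz : f z ≤ z) : sInf {x | x ∈ Icc lo hi ∧ f x = x} ≤ z := by
  set m := sInf {w | w ∈ Icc lo hi ∧ f w ≤ w}
  have hm_le : ∀ w ∈ Icc lo hi, f w ≤ w → m ≤ w := fun w hw hfw => sInf_le ⟨hw, hfw⟩
  have hm : m ∈ Icc lo hi := ⟨le_sInf fun w hw => hw.1.1, (hm_le z hz hfz).trans hz.2⟩
  have hfm : f m ≤ m := le_sInf fun w ⟨hw, hfw⟩ => (hf hm hw (hm_le w hw hfw)).trans hfw
  have hfm_mem : f m ∈ Icc lo hi :=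
    ⟨hlo.trans (hf ⟨le_rfl, hm.1.trans hm.2⟩ hm hm.1), hfm.trans hm.2⟩
  have hmf : m ≤ f m := hm_le _ hfm_mem (hf hfm_mem hm hfm)
  exact le_trans (sInf_le ⟨hm, le_antisymm hfm hmf⟩) (hm_le z hz hfz)

namespace PartialApprox

variable (A B : PartialApprox L) {a b : L}

theorem monotoneOn_A1_left (b : L) : MonotoneOn (A.A1 · b) (Icc ⊥ b) :=
  fun _ hu _ hv huv => A.mono1 _ b _ b hu.2 hv.2 huv le_rfl

theorem monotoneOn_A2_right (a : L) : MonotoneOn (A.A2 a) (Icc a ⊤) :=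
  fun _ hu _ hv huv => A.mono2 a _ a _ hv.1 hu.1 le_rfl huv

theorem cdown_le {z : L} (hzb : z ≤ b) (hz : A.A1 z b ≤ z) : A.cdown b ≤ z := by
  simpa [cdown] using (A.monotoneOn_A1_left b).sInf_fixed_Icc_le bot_le ⟨bot_le, hzb⟩ hz

theorem cup_le (ha : a ≤ A.A2 a a) {z : L} (haz : a ≤ z) (hz : A.A2 a z ≤ z) :
    A.cup a ≤ z := by
  simpa [cup] using (A.monotoneOn_A2_right a).sInf_fixed_Icc_le ha ⟨haz, le_top⟩ hz

theorem reliable.le_A2_self {A : PartialApprox L} (h : A.reliable a b) : a ≤ A.A2 a a :=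
  calc a ≤ A.A1 a b := h.2.1
    _ ≤ A.A1 a a := A.mono1 a b a a h.1 le_rfl le_rfl h.1
    _ = A.A2 a a := A.diag a

theorem reliable.of_precLE {A B : PartialApprox L} (h : A.reliable a b)
    (hAB : A.A1 a b ≤ B.A1 a b ∧ B.A2 a b ≤ A.A2 a b) : B.reliable a b :=
  ⟨h.1, h.2.1.trans hAB.1, hAB.2.trans h.2.2⟩

theorem cdown_le_cdown (hAB : ∀ z ≤ b, A.A1 z b ≤ B.A1 z b) : A.cdown b ≤ B.cdown b :=
  le_sInf fun _ hz => A.cdown_le hz.1 ((hAB _ hz.1).trans hz.2.le)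

theorem cup_le_cup (ha : a ≤ B.A2 a a) (hAB : ∀ z, a ≤ z → B.A2 a z ≤ A.A2 a z) :
    B.cup a ≤ A.cup a :=
  le_sInf fun _ hz => B.cup_le ha hz.1 ((hAB _ hz.1).trans hz.2.le)

end PartialApprox

theorem stmt14 (A B : PartialApprox L)
    (hAB : ∀ x y : L, x ≤ y → A.A1 x y ≤ B.A1 x y ∧ B.A2 x y ≤ A.A2 x y)
    (a b : L) (h : A.prudent a b) :
    B.prudent a b ∧ A.cdown b ≤ B.cdown b ∧ B.cup a ≤ A.cup a := by
  obtain ⟨hA, ha⟩ := h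
  have hB : B.reliable a b := hA.of_precLE (hAB a b hA.1)
  have hcdown : A.cdown b ≤ B.cdown b := A.cdown_le_cdown B fun z hz => (hAB z b hz).1
  have hcup : B.cup a ≤ A.cup a := A.cup_le_cup B hB.le_A2_self fun z hz => (hAB a z hz).2
  exact ⟨⟨hB, ha.trans hcdown⟩, hcdown, hcup⟩
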